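/- arXiv:1102.0552 — 2 statements merged into one kernel-verified Lean document; each statement's English description precedes it below -/
import Mathlib

section
/- Let G be a graph and ω an end of G. If infinitely many vertices of G dominate ω, then G contains a subdivision of the countably infinite complete graph K_{ℵ0}. -/
open scoped ENNReal

namespace Paper

variable {V : Type*} {W : Type*}

/-- Reachability in `G` by a walk avoiding the vertex set `S`. -/
def ReachAvoid (G : SimpleGraph V) (S : Set V) (u v : V) : Prop :=
  ∃ p : G.Walk u v, ∀ x ∈ p.support, x ∉ S

/-- A ray (one-way infinite path) in `G`. -/
structure IsRay (G : SimpleGraph V) (f : ℕ → V) : Prop where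
  inj : Function.Injective f
  adj : ∀ n, G.Adj (f n) (f (n + 1))

/-- Two rays are equivalent (belong to the same end) if no finite vertex set
separates them: for every finite `S` some vertex of the first ray can be joined
to some vertex of the second by a walk avoiding `S`. -/
def EquivRay (G : SimpleGraph V) (f g : ℕ → V) : Prop :=
  ∀ S : Set V, S.Finite → ∃ m n, ReachAvoid G S (f m) (g n)

/-- The set of ends of `G`: rays modulo equivalence. -/
def Ends (G : SimpleGraph V) :=
  Quot (fun f g : {f : ℕ → V // IsRay G f} => EquivRay G f.1 g.1)

/-- `v` dominates the ray `f`: there are infinitely many `v`–`V(f)` paths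
pairwise disjoint except in `v`. -/
def DominatesRay (G : SimpleGraph V) (v : V) (f : ℕ → V) : Prop :=
  ∃ (g : ℕ → ℕ) (p : ∀ n, G.Walk v (f (g n))),
    Function.Injective g ∧ (∀ n, (p n).IsPath) ∧
    ∀ m n, m ≠ n → ∀ x ∈ (p m).support, x ∈ (p n).support → x = v

/-- The set of vertices dominating the end of the ray `r`. -/
def Dom (G : SimpleGraph V) (r : ℕ → V) : Set V := {v | DominatesRay G v r}

/-- Vertex-boundary of the vertex set `A`. -/
def vBoundary (G : SimpleGraph V) (A : Set V) : Set V :=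
  {x | x ∈ A ∧ ∃ y, y ∉ A ∧ G.Adj x y}

/-- Edge-boundary of the vertex set `A`. -/
def eBoundary (G : SimpleGraph V) (A : Set V) : Set (Sym2 V) :=
  {e | ∃ x y, x ∈ A ∧ y ∉ A ∧ G.Adj x y ∧ e = s(x, y)}

/-- `S` is a `V'`–`Ω(A)` separator: `V' ⊄ S` and no component of `G - S`
contains both a vertex of `V'` and (the tail of) a ray lying in `A`. -/
def SepVertsEndsIn (G : SimpleGraph V) (V' S A : Set V) : Prop :=
  ¬ V' ⊆ S ∧ ∀ v ∈ V', ∀ f : ℕ → V, IsRay G f → Set.range f ⊆ A →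
    ∀ n, (∀ m, n ≤ m → f m ∉ S) → ¬ ReachAvoid G S v (f n)

/-- `S` is an inclusion-minimal `V'`–`Ω(A)` separator. -/
def MinSepVertsEndsIn (G : SimpleGraph V) (V' S A : Set V) : Prop :=
  SepVertsEndsIn G V' S A ∧ ∀ S' ⊂ S, ¬ SepVertsEndsIn G V' S' A

/-- The graph `G_ω`: `G` minus the dominating vertices of the end of `r`. -/
def Gmin (G : SimpleGraph V) (r : ℕ → V) : SimpleGraph ((Dom G r)ᶜ : Set V) :=
  G.induce ((Dom G r)ᶜ : Set V)

/-- A ray of `G_ω` belonging to (the unique end `ω̂` induced by) the end `ω` of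
the ray `r`. -/
def InDeletedEnd (G : SimpleGraph V) (r : ℕ → V)
    (f : ℕ → ((Dom G r)ᶜ : Set V)) : Prop :=
  IsRay (Gmin G r) f ∧ EquivRay G (fun n => (f n : V)) r

/-- An `ω̂`-region of `G_ω`: induced connected, finite vertex-boundary,
containing a ray of `ω̂`. -/
def IsOmegaRegion (G : SimpleGraph V) (r : ℕ → V)
    (A : Set ((Dom G r)ᶜ : Set V)) : Prop :=
  ((Gmin G r).induce A).Connected ∧ (vBoundary (Gmin G r) A).Finite ∧
    ∃ f, InDeletedEnd G r f ∧ Set.range f ⊆ A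

/-- `(Ĥ_i) → ω̂` : a sequence of distinct nested `ω̂`-regions whose
vertex-boundaries are minimal separators. -/
def Converges (G : SimpleGraph V) (r : ℕ → V)
    (A : ℕ → Set ((Dom G r)ᶜ : Set V)) : Prop :=
  Function.Injective A ∧ (∀ i, IsOmegaRegion G r (A i)) ∧
    (∀ i, A (i + 1) ⊆ A i \ vBoundary (Gmin G r) (A i)) ∧
    (∀ i, MinSepVertsEndsIn (Gmin G r) (vBoundary (Gmin G r) (A i))
      (vBoundary (Gmin G r) (A (i + 1))) (A (i + 1)))

/-- The ratio `|∂_e A| / |∂_v A|`, as an extended nonnegative real. -/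
noncomputable def bratio (G : SimpleGraph V) (A : Set V) : ℝ≥0∞ :=
  ((eBoundary G A).encard : ℝ≥0∞) / ((vBoundary G A).encard : ℝ≥0∞)

open Classical in
/-- The relative degree `d_{e/v}` of the end of the ray `r`. -/
noncomputable def relDegree (G : SimpleGraph V) (r : ℕ → V) : ℝ≥0∞ :=
  if (Dom G r).Infinite ∨ ¬ ∃ f, InDeletedEnd G r f then
    ((Dom G r).encard : ℝ≥0∞)
  else
    ((Dom G r).encard : ℝ≥0∞) +
      ⨅ A : {A : ℕ → Set ((Dom G r)ᶜ : Set V) // Converges G r A},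
        Filter.atTop.liminf fun i => bratio (Gmin G r) (A.1 i)

/-- The degree of a vertex, as an extended real. -/
noncomputable def degER (G : SimpleGraph V) (v : V) : EReal :=
  (((G.neighborSet v).encard : ℝ≥0∞) : EReal)

/-- A subdivision of `K_k` in `G` with branching vertices `b 0, …, b (k-1)`. -/
def HasTKOn (G : SimpleGraph V) {k : ℕ} (b : Fin k ↪ V) : Prop :=
  ∃ p : ∀ i j : Fin k, G.Walk (b i) (b j),
    (∀ i j, i ≠ j → (p i j).IsPath) ∧
    (∀ i j, i ≠ j → ∀ x ∈ (p i j).support, x ∈ Set.range b → x = b i ∨ x = b j) ∧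
    (∀ i j i' j', i ≠ j → i' ≠ j' → s(i, j) ≠ s(i', j') →
      ∀ x ∈ (p i j).support, x ∈ (p i' j').support → x ∈ Set.range b)

/-- `K_k` is a topological minor of `G`. -/
def HasTopK (G : SimpleGraph V) (k : ℕ) : Prop :=
  ∃ b : Fin k ↪ V, HasTKOn G b

/-- A subdivision of `K_{ℵ₀}` in `G` with branching vertices `b 0, b 1, …`. -/
def HasTKInfOn (G : SimpleGraph V) (b : ℕ ↪ V) : Prop :=
  ∃ p : ∀ i j : ℕ, G.Walk (b i) (b j),
    (∀ i j, i ≠ j → (p i j).IsPath) ∧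
    (∀ i j, i ≠ j → ∀ x ∈ (p i j).support, x ∈ Set.range b → x = b i ∨ x = b j) ∧
    (∀ i j i' j', i ≠ j → i' ≠ j' → s(i, j) ≠ s(i', j') →
      ∀ x ∈ (p i j).support, x ∈ (p i' j').support → x ∈ Set.range b)

/-- `K_k` is a minor of `G` (with finite branch sets). -/
def HasKMinor (G : SimpleGraph V) (k : ℕ) : Prop :=
  ∃ B : Fin k → Finset V,
    (∀ i, (B i).Nonempty) ∧ (∀ i j, i ≠ j → Disjoint (B i) (B j)) ∧
    (∀ i, (G.induce (B i : Set V)).Connected) ∧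
    (∀ i j, i ≠ j → ∃ x ∈ B i, ∃ y ∈ B j, G.Adj x y)

/-- The average degree of the finite induced subgraph of `G` on `s`. -/
noncomputable def avgDegOn (G : SimpleGraph V) (s : Finset V) : ℝ :=
  (∑ v ∈ s, ((G.neighborSet v ∩ ↑s).ncard : ℝ)) / s.card

/-- `G` is rayless. -/
def Rayless (G : SimpleGraph V) : Prop := ¬ ∃ f : ℕ → V, IsRay G f

/-- The average degree of the vertex set `F` into `A` in `G`. -/
noncomputable def avgDegIn (G : SimpleGraph V) (A F : Set V) : ℝ :=
  (∑ᶠ v ∈ F, ((G.neighborSet v ∩ A).ncard : ℝ)) / F.ncard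

/-!
Two vertices dominating the end of `r` cannot be separated by a finite set `S` avoiding them:
each reaches the tail of `r` beyond `S` by one of its infinitely many dominating paths, all but
finitely many of which miss `S`, and the tail connects the two. In a graph with an infinite set
`D` of such pairwise finitely inseparable vertices, a subdivided `K_{ℵ₀}` is built greedily:
the next branch vertex is taken from `D` outside the finitely many vertices used so far, and
joined to the earlier branch vertices one after the other by paths avoiding everything used
before.
-/

section Linking

variable {G : SimpleGraph V} {S : Set V} {u v w : V}

theorem ReachAvoid.refl (hu : u ∉ S) : ReachAvoid G S u u :=
  ⟨.nil, by simpa using hu⟩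

theorem ReachAvoid.symm (h : ReachAvoid G S u v) : ReachAvoid G S v u := by
  obtain ⟨p, hp⟩ := h
  exact ⟨p.reverse, by simpa using hp⟩

theorem ReachAvoid.trans (huv : ReachAvoid G S u v) (hvw : ReachAvoid G S v w) :
    ReachAvoid G S u w := by
  obtain ⟨p, hp⟩ := huv
  obtain ⟨q, hq⟩ := hvw
  refine ⟨p.append q, fun x hx => ?_⟩
  rcases (SimpleGraph.Walk.mem_support_append_iff p q).1 hx with hx | hx
  exacts [hp x hx, hq x hx]

theorem ReachAvoid.of_adj (h : G.Adj u v) (hu : u ∉ S) (hv : v ∉ S) : ReachAvoid G S u v :=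
  ⟨.cons h .nil, by simp [hu, hv]⟩

theorem ReachAvoid.exists_isPath (h : ReachAvoid G S u v) :
    ∃ p : G.Walk u v, p.IsPath ∧ ∀ x ∈ p.support, x ∉ S := by
  classical
  obtain ⟨p, hp⟩ := h
  exact ⟨p.bypass, p.bypass_isPath, fun x hx => hp x (p.support_bypass_subset_support hx)⟩

variable {r : ℕ → V}

theorem IsRay.exists_tail_notMem (hr : IsRay G r) (hS : S.Finite) :
    ∃ N, ∀ m, N ≤ m → r m ∉ S := by
  obtain ⟨N, hN⟩ := (hS.preimage hr.inj.injOn).bddAbove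
  exact ⟨N + 1, fun m hm hmS => by have := hN hmS; omega⟩

theorem IsRay.reachAvoid_of_tail (hr : IsRay G r) {N : ℕ} (hN : ∀ m, N ≤ m → r m ∉ S)
    {k : ℕ} (hk : N ≤ k) : ReachAvoid G S (r N) (r k) := by
  induction k, hk using Nat.le_induction with
  | base => exact .refl (hN N le_rfl)
  | succ k hk ih => exact ih.trans (.of_adj (hr.adj k) (hN k hk) (hN (k + 1) (by omega)))

theorem DominatesRay.exists_reachAvoid (hu : DominatesRay G u r) (hS : S.Finite) (huS : u ∉ S)
    (N : ℕ) : ∃ k, N ≤ k ∧ ReachAvoid G S u (r k) := by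
  obtain ⟨g, p, hg, -, hdisj⟩ := hu
  have hmeet : (⋃ x ∈ S, {n | x ∈ (p n).support}).Finite :=
    hS.biUnion fun x hx => Set.Subsingleton.finite fun m hm n hn => by
      by_contra hmn
      exact huS (hdisj m n hmn x hm hn ▸ hx)
  have hnear : (g ⁻¹' Set.Iio N).Finite := (Set.finite_Iio N).preimage hg.injOn
  obtain ⟨n, hn⟩ := (hmeet.union hnear).infinite_compl.nonempty
  simp only [Set.mem_compl_iff, Set.mem_union, Set.mem_iUnion, Set.mem_ofPred_eq,
    Set.mem_preimage, Set.mem_Iio, not_or, not_exists, not_lt] at hn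
  exact ⟨g n, hn.2, p n, fun x hx hxS => hn.1 x hxS hx⟩

end Linking

def FinitelyInseparable (G : SimpleGraph V) (D : Set V) : Prop :=
  ∀ S : Set V, S.Finite → ∀ u ∈ D, ∀ v ∈ D, u ∉ S → v ∉ S → ReachAvoid G S u v

theorem finitelyInseparable_dom {G : SimpleGraph V} {r : ℕ → V} (hr : IsRay G r) :
    FinitelyInseparable G (Dom G r) := by
  intro S hS u hu v hv huS hvS
  obtain ⟨N, hN⟩ := hr.exists_tail_notMem hS
  obtain ⟨k, hk, huk⟩ := hu.exists_reachAvoid hS huS N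
  obtain ⟨l, hl, hvl⟩ := hv.exists_reachAvoid hS hvS N
  exact huk.trans ((hr.reachAvoid_of_tail hN hk).symm.trans
    ((hr.reachAvoid_of_tail hN hl).trans hvl.symm))

section InnerAvoids

variable {G : SimpleGraph V} {u v : V}

def InnerAvoids (p : G.Walk u v) (S : Set V) : Prop :=
  ∀ x ∈ p.support, x ∉ S \ {u, v}

theorem InnerAvoids.mono {p : G.Walk u v} {S T : Set V} (h : InnerAvoids p S) (hTS : T ⊆ S) :
    InnerAvoids p T :=
  fun x hx hxT => h x hx ⟨hTS hxT.1, hxT.2⟩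

theorem InnerAvoids.eq_or_eq {p : G.Walk u v} {S : Set V} (h : InnerAvoids p S) {x : V}
    (hx : x ∈ p.support) (hxS : x ∈ S) : x = u ∨ x = v := by
  by_contra hxuv
  exact h x hx ⟨hxS, hxuv⟩

end InnerAvoids

namespace FinitelyInseparable

variable {G : SimpleGraph V} {D : Set V}

theorem exists_fan (hlink : FinitelyInseparable G D) {U : Set V} (hU : U.Finite) {v : V}
    (hv : v ∈ D) {t : ℕ → V} (ht : ∀ i, t i ∈ D) (m : ℕ) :
    ∃ f : ∀ i, G.Walk v (t i), ∀ i < m, (f i).IsPath ∧ InnerAvoids (f i) U ∧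
      ∀ i' < i, InnerAvoids (f i) {x | x ∈ (f i').support} := by
  induction m with
  | zero =>
    exact ⟨fun i => (hlink ∅ Set.finite_empty v hv (t i) (ht i) id id).choose, by simp⟩
  | succ m ih =>
    obtain ⟨f, hf⟩ := ih
    let T := U ∪ ⋃ i' ∈ Set.Iio m, {x | x ∈ (f i').support}
    have hT : T.Finite := hU.union <| (Set.finite_Iio m).biUnion fun i' _ => List.finite_toSet _
    obtain ⟨g, hg, hgT⟩ := (hlink (T \ {v, t m}) hT.sdiff v hv (t m) (ht m)
      (fun h => h.2 (by simp)) (fun h => h.2 (by simp))).exists_isPath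
    have hgT : InnerAvoids g T := hgT
    refine ⟨Function.update f m g, fun i hi => ?_⟩
    rcases Nat.lt_succ_iff_lt_or_eq.1 hi with hi | rfl
    · rw [Function.update_of_ne hi.ne]
      refine ⟨(hf i hi).1, (hf i hi).2.1, fun i' hi' => ?_⟩
      rw [Function.update_of_ne (by omega)]
      exact (hf i hi).2.2 i' hi'
    · rw [Function.update_self]
      refine ⟨hg, hgT.mono Set.subset_union_left, fun i' hi' => ?_⟩
      rw [Function.update_of_ne hi'.ne]
      exact hgT.mono fun x hx => Or.inr (Set.mem_biUnion hi' hx)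

end FinitelyInseparable

/-- A branch vertex of the subdivision being built, with its paths: at stage `j`, `path i` runs
to the branch vertex of stage `i` for every `i < j`. -/
structure Branch (G : SimpleGraph V) (D : Set V) where
  vertex : V
  mem : vertex ∈ D
  path : ℕ → Σ w : V, G.Walk vertex w

namespace Branch

variable {G : SimpleGraph V} {D : Set V}

def usedBefore {j : ℕ} (s : ∀ k < j, Branch G D) : Set V :=
  ⋃ k ∈ Set.Iio j, insert (s k ‹_›).vertex
    (⋃ i ∈ Set.Iio k, {x | x ∈ ((s k ‹_›).path i).2.support})

theorem usedBefore_finite {j : ℕ} (s : ∀ k < j, Branch G D) : (usedBefore s).Finite :=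
  (Set.finite_Iio j).biUnion' fun k _ => .insert _ <|
    (Set.finite_Iio k).biUnion fun _ _ => List.finite_toSet _

@[simp]
theorem mem_usedBefore {j : ℕ} {s : ∀ k < j, Branch G D} {x : V} :
    x ∈ usedBefore s ↔ ∃ k, ∃ hk : k < j,
      x = (s k hk).vertex ∨ ∃ i < k, x ∈ ((s k hk).path i).2.support := by
  simp [usedBefore]

def IsNext {j : ℕ} (s : ∀ k < j, Branch G D) (c : Branch G D) : Prop :=
  c.vertex ∉ usedBefore s ∧ ∀ i (hi : i < j), (c.path i).1 = (s i hi).vertex ∧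
    (c.path i).2.IsPath ∧ InnerAvoids (c.path i).2 (usedBefore s) ∧
    ∀ i' < i, InnerAvoids (c.path i).2 {x | x ∈ (c.path i').2.support}

theorem exists_isNext (hlink : FinitelyInseparable G D) (hD : D.Infinite) {j : ℕ}
    (s : ∀ k < j, Branch G D) : ∃ c : Branch G D, IsNext s c := by
  obtain ⟨v, hvD, hvU⟩ := (hD.sdiff (usedBefore_finite s)).nonempty
  let t i : V := if hi : i < j then (s i hi).vertex else v
  have ht i : t i ∈ D := by
    by_cases hi : i < j
    · simpa [t, hi] using (s i hi).mem
    · simpa [t, hi] using hvD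
  obtain ⟨f, hf⟩ := hlink.exists_fan (usedBefore_finite s) hvD ht j
  exact ⟨⟨v, hvD, fun i => ⟨t i, f i⟩⟩, hvU, fun i hi => ⟨by simp [t, hi], hf i hi⟩⟩

variable (hlink : FinitelyInseparable G D) (hD : D.Infinite)

noncomputable def next {j : ℕ} (s : ∀ k < j, Branch G D) : Branch G D :=
  (exists_isNext hlink hD s).choose

noncomputable def seq : ℕ → Branch G D :=
  Nat.strongRec fun _ s => next hlink hD s

theorem isNext_seq (j : ℕ) : IsNext (fun k (_ : k < j) => seq hlink hD k) (seq hlink hD j) := by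
  rw [seq, Nat.strongRec_eq]
  exact (exists_isNext hlink hD _).choose_spec

theorem seq_path_fst {i j : ℕ} (hij : i < j) :
    ((seq hlink hD j).path i).1 = (seq hlink hD i).vertex :=
  ((isNext_seq hlink hD j).2 i hij).1

theorem seq_vertex_mem_usedBefore {k j : ℕ} (hkj : k < j) :
    (seq hlink hD k).vertex ∈ usedBefore fun k (_ : k < j) => seq hlink hD k := by
  simp only [mem_usedBefore]
  exact ⟨k, hkj, .inl rfl⟩

theorem mem_usedBefore_of_mem_seq_path {i k j : ℕ} (hik : i < k) (hkj : k < j) {x : V}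
    (hx : x ∈ ((seq hlink hD k).path i).2.support) :
    x ∈ usedBefore fun k (_ : k < j) => seq hlink hD k := by
  simp only [mem_usedBefore]
  exact ⟨k, hkj, .inr ⟨i, hik, hx⟩⟩

theorem seq_vertex_injective : Function.Injective fun k => (seq hlink hD k).vertex := by
  intro k l hkl
  simp only at hkl
  rcases lt_trichotomy k l with h | h | h
  · exact ((isNext_seq hlink hD l).1 (hkl ▸ seq_vertex_mem_usedBefore hlink hD h)).elim
  · exact h
  · exact ((isNext_seq hlink hD k).1 (hkl ▸ seq_vertex_mem_usedBefore hlink hD h)).elim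

theorem eq_or_eq_of_seq_vertex_mem_seq_path {i j k : ℕ} (hij : i < j)
    (hk : (seq hlink hD k).vertex ∈ ((seq hlink hD j).path i).2.support) :
    (seq hlink hD k).vertex = (seq hlink hD i).vertex ∨
      (seq hlink hD k).vertex = (seq hlink hD j).vertex := by
  rcases lt_trichotomy k j with hkj | rfl | hjk
  · rw [← seq_path_fst hlink hD hij]
    exact (((isNext_seq hlink hD j).2 i hij).2.2.1.eq_or_eq hk
      (seq_vertex_mem_usedBefore hlink hD hkj)).symm
  · exact .inr rfl
  · exact ((isNext_seq hlink hD k).1 (mem_usedBefore_of_mem_seq_path hlink hD hij hjk hk)).elim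

theorem mem_range_of_mem_seq_path_of_mem_seq_path {i j i' j' : ℕ} (hij : i < j) (hij' : i' < j')
    (hne : (i, j) ≠ (i', j')) {x : V} (hx : x ∈ ((seq hlink hD j).path i).2.support)
    (hx' : x ∈ ((seq hlink hD j').path i').2.support) :
    x ∈ Set.range fun k => (seq hlink hD k).vertex := by
  wlog hlex : j < j' ∨ j = j' ∧ i < i' generalizing i j i' j'
  · refine this hij' hij hne.symm hx' hx ?_
    have : i ≠ i' ∨ j ≠ j' := by rw [Ne, Prod.mk.injEq, not_and_or] at hne; exact hne
    omega
  rcases hlex with hjj' | ⟨rfl, hii'⟩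
  · have := ((isNext_seq hlink hD j').2 i' hij').2.2.1.eq_or_eq hx'
      (mem_usedBefore_of_mem_seq_path hlink hD hij hjj' hx)
    rw [seq_path_fst hlink hD hij'] at this
    exact this.elim (⟨j', ·.symm⟩) (⟨i', ·.symm⟩)
  · have := ((isNext_seq hlink hD j).2 i' hij').2.2.2 i hii' |>.eq_or_eq hx' hx
    rw [seq_path_fst hlink hD hij'] at this
    exact this.elim (⟨j, ·.symm⟩) (⟨i', ·.symm⟩)

end Branch

theorem hasTKInfOn_of_forall_lt {G : SimpleGraph V} (b : ℕ ↪ V)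
    (p : ∀ i j, i < j → G.Walk (b i) (b j)) (hpath : ∀ i j h, (p i j h).IsPath)
    (hbranch : ∀ i j h, ∀ x ∈ (p i j h).support, x ∈ Set.range b → x = b i ∨ x = b j)
    (hdisj : ∀ i j i' j' h h', (i, j) ≠ (i', j') →
      ∀ x ∈ (p i j h).support, x ∈ (p i' j' h').support → x ∈ Set.range b) :
    HasTKInfOn G b := by
  let q i j : G.Walk (b i) (b j) :=
    if h : i < j then p i j h
    else if h' : j < i then (p j i h').reverse
    else SimpleGraph.Walk.nil.copy rfl (congrArg b (by omega))
  have hq : ∀ i j, i ≠ j → ∃ k l, ∃ h : k < l, s(i, j) = s(k, l) ∧ (q i j).IsPath ∧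
      ∀ x, x ∈ (q i j).support ↔ x ∈ (p k l h).support := by
    intro i j hij
    rcases hij.lt_or_gt with h | h
    · exact ⟨i, j, h, rfl, by simp [q, h, hpath], by simp [q, h]⟩
    · exact ⟨j, i, h, Sym2.eq_swap, by simp [q, h, h.not_gt, hpath], by simp [q, h, h.not_gt]⟩
  refine ⟨q, fun i j hij => ?_, fun i j hij x hx hxb => ?_, ?_⟩
  · obtain ⟨k, l, h, -, hqpath, -⟩ := hq i j hij
    exact hqpath
  · obtain ⟨k, l, h, hs, -, hsupp⟩ := hq i j hij
    have := hbranch k l h x ((hsupp x).1 hx) hxb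
    rcases Sym2.eq_iff.1 hs with ⟨rfl, rfl⟩ | ⟨rfl, rfl⟩
    exacts [this, this.symm]
  · intro i j i' j' hij hij' hs x hx hx'
    obtain ⟨k, l, h, hkl, -, hsupp⟩ := hq i j hij
    obtain ⟨k', l', h', hkl', -, hsupp'⟩ := hq i' j' hij'
    refine hdisj k l k' l' h h' (fun he => hs ?_) x ((hsupp x).1 hx) ((hsupp' x).1 hx')
    rw [hkl, hkl', Prod.mk.inj he |>.1, Prod.mk.inj he |>.2]

theorem FinitelyInseparable.exists_hasTKInfOn {G : SimpleGraph V} {D : Set V}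
    (hlink : FinitelyInseparable G D) (hD : D.Infinite) : ∃ b : ℕ ↪ V, HasTKInfOn G b := by
  let B := Branch.seq hlink hD
  let b : ℕ ↪ V := ⟨fun k => (B k).vertex, Branch.seq_vertex_injective hlink hD⟩
  let p i j (h : i < j) : G.Walk (b i) (b j) :=
    (((B j).path i).2.copy rfl (Branch.seq_path_fst hlink hD h)).reverse
  have hsupp i j h x : x ∈ (p i j h).support ↔ x ∈ ((B j).path i).2.support := by simp [p]
  refine ⟨b, hasTKInfOn_of_forall_lt b p (fun i j h => ?_) (fun i j h x hx ⟨k, hk⟩ => ?_)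
    fun i j i' j' h h' hne x hx hx' => ?_⟩
  · simpa [p] using ((Branch.isNext_seq hlink hD j).2 i h).2.1
  · subst hk
    exact Branch.eq_or_eq_of_seq_vertex_mem_seq_path hlink hD h ((hsupp i j h _).1 hx)
  · exact Branch.mem_range_of_mem_seq_path_of_mem_seq_path hlink hD h h' hne
      ((hsupp i j h x).1 hx) ((hsupp i' j' h' x).1 hx')

/-- if infinitely many vertices dominate the end of the ray `r`,
then `G` contains a subdivision of `K_{ℵ₀}`. -/
theorem topKInf_of_infinitely_many_dominating (G : SimpleGraph V) (r : ℕ → V)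
    (hr : IsRay G r) (h : (Dom G r).Infinite) :
    ∃ b : ℕ ↪ V, HasTKInfOn G b :=
  (finitelyInseparable_dom hr).exists_hasTKInfOn h

end Paper
end

section
/- Let G be a graph, ω an end of G dominated by only finitely many vertices, and let G_ω = G − Dom(ω) where Dom(ω) is the set of vertices dominating ω. If G_ω contains a ray of ω, then there is exactly one end of G_ω containing rays of ω. -/
/-!
Both rays are equivalent in `G` to the ray `r`, so they are equivalent to each other: a walk from
either ray that avoids a finite set `S` together with an initial segment of `r` ends on the tail
of `r`, which misses `S`. Equivalence then passes to `G_ω = G[Dom(ω)ᶜ]` because `Dom(ω)` is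
finite and may be added to the set to be avoided.
-/

open scoped ENNReal

namespace Paper

variable {V : Type*} {W : Type*}

namespace ReachAvoid

variable {G : SimpleGraph V} {S : Set V} {u v w : V}

lemma notMem_left : ReachAvoid G S u v → u ∉ S
  | ⟨p, hp⟩ => hp u p.start_mem_support

lemma notMem_right : ReachAvoid G S u v → v ∉ S
  | ⟨p, hp⟩ => hp v p.end_mem_support

lemma refl_s5 (hu : u ∉ S) : ReachAvoid G S u u :=
  ⟨.nil, by simpa using hu⟩

lemma of_adj_s5 (h : G.Adj u v) (hu : u ∉ S) (hv : v ∉ S) : ReachAvoid G S u v :=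
  ⟨h.toWalk, by simp [hu, hv]⟩

lemma symm_s5 : ReachAvoid G S u v → ReachAvoid G S v u
  | ⟨p, hp⟩ => ⟨p.reverse, by simpa using hp⟩

lemma trans_s5 : ReachAvoid G S u v → ReachAvoid G S v w → ReachAvoid G S u w
  | ⟨p, hp⟩, ⟨q, hq⟩ => ⟨p.append q, fun x hx => by
      rcases (SimpleGraph.Walk.mem_support_append_iff p q).1 hx with hx | hx
      exacts [hp x hx, hq x hx]⟩

lemma mono {S' : Set V} (h : S' ⊆ S) : ReachAvoid G S u v → ReachAvoid G S' u v
  | ⟨p, hp⟩ => ⟨p, fun x hx hxS' => hp x hx (h hxS')⟩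

lemma induce {A : Set V} {S : Set A} {u v : A}
    (h : ReachAvoid G (Subtype.val '' S ∪ Aᶜ) u v) : ReachAvoid (G.induce A) S u v := by
  obtain ⟨p, hp⟩ := h
  refine ⟨p.induce A fun x hx => not_not.1 fun hxA => hp x hx (.inr hxA), fun x hx hxS => ?_⟩
  rw [SimpleGraph.Walk.support_induce, List.mem_attachWith] at hx
  exact hp x hx (.inl ⟨x, hxS, rfl⟩)

end ReachAvoid

lemma IsRay.reachAvoid {G : SimpleGraph V} {r : ℕ → V} (hr : IsRay G r) {S : Set V} {n : ℕ}
    (hS : ∀ i, n ≤ i → r i ∉ S) {k l : ℕ} (hk : n ≤ k) (hl : n ≤ l) :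
    ReachAvoid G S (r k) (r l) := by
  have forward : ∀ k l, n ≤ k → k ≤ l → ReachAvoid G S (r k) (r l) := by
    intro k l hk hkl
    induction l, hkl using Nat.le_induction with
    | base => exact .refl (hS k hk)
    | succ l hkl ih =>
      exact ih.trans_s5 (.of_adj (hr.adj l) (hS l (by omega)) (hS (l + 1) (by omega)))
  rcases le_total k l with hkl | hlk
  · exact forward k l hk hkl
  · exact (forward l k hl hlk).symm_s5

namespace EquivRay

variable {G : SimpleGraph V}

lemma symm_s5 {f g : ℕ → V} (h : EquivRay G f g) : EquivRay G g f := fun S hS =>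
  let ⟨m, n, hmn⟩ := h S hS
  ⟨n, m, hmn.symm_s5⟩

lemma trans_s5 {f r g : ℕ → V} (hr : IsRay G r) (hfr : EquivRay G f r) (hrg : EquivRay G r g) :
    EquivRay G f g := by
  intro S hS
  obtain ⟨N, hN⟩ := (hS.preimage hr.inj.injOn).bddAbove
  have htail : ∀ i, N + 1 ≤ i → r i ∉ S := fun i hi hri => by
    have : i ≤ N := hN hri
    omega
  have hS' : (S ∪ r '' Set.Iic N).Finite := hS.union ((Set.finite_Iic N).image r)
  obtain ⟨m, k, hmk⟩ := hfr _ hS'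
  obtain ⟨l, n, hln⟩ := hrg _ hS'
  have hk : N < k := not_le.1 fun hkN => hmk.notMem_right (.inr ⟨k, hkN, rfl⟩)
  have hl : N < l := not_le.1 fun hlN => hln.notMem_left (.inr ⟨l, hlN, rfl⟩)
  exact ⟨m, n, ((hmk.mono Set.subset_union_left).trans_s5 (hr.reachAvoid htail hk hl)).trans_s5
    (hln.mono Set.subset_union_left)⟩

lemma induce {A : Set V} (hA : Aᶜ.Finite) {f g : ℕ → A}
    (h : EquivRay G (fun n => (f n : V)) (fun n => (g n : V))) : EquivRay (G.induce A) f g :=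
  fun _ hS =>
    let ⟨m, n, hmn⟩ := h _ ((hS.image _).union hA)
    ⟨m, n, hmn.induce⟩

end EquivRay

/-- if `Dom(ω)` is finite and `G_ω = G - Dom(ω)` contains rays of
`ω`, then all such rays belong to the same end of `G_ω`; i.e. there is exactly
one end of `G_ω` containing rays of `ω`. -/
theorem unique_end_in_deleted (G : SimpleGraph V) (r : ℕ → V) (hr : IsRay G r)
    (hfin : (Dom G r).Finite)
    (f g : ℕ → ((Dom G r)ᶜ : Set V))
    (hf : InDeletedEnd G r f) (hg : InDeletedEnd G r g) :
    EquivRay (Gmin G r) f g :=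
  EquivRay.induce (by rwa [compl_compl]) (hf.2.trans_s5 hr hg.2.symm_s5)

end Paper
end
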